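/- Let d : YoungDiagram → ℕ count standard Young tableaux. Then for every n : ℕ the set {λ : YoungDiagram | λ.card = n} is finite and the sum of (d λ)^2 over this set equals n! (so that λ ↦ (d λ)^2 / n! defines a probability distribution, the Plancherel measure of the symmetric group S_n). -/

import Mathlib

/-!
Young's lattice is a differential poset. A diagram has one more outer corner than inner corners
(they alternate along its rim, starting and ending with an outer one), so it has one more upper
cover than lower covers. Two distinct diagrams `μ ≠ ν` of the same size have at most one common
upper cover, `μ ⊔ ν`, and at most one common lower cover, `μ ⊓ ν`; since
`|μ ⊔ ν| + |μ ⊓ ν| = |μ| + |ν|`, one exists iff the other does. Double counting then turns the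
recursion for `d` into `∑_{ν ⋗ μ} d ν = (|μ| + 1) d μ`, and expanding one factor of `d λ ^ 2`
by the recursion gives `∑_{|λ| = n + 1} d λ ^ 2 = (n + 1) ∑_{|μ| = n} d μ ^ 2`.
-/

/-- `CoversBelow μ lam` (written `μ ⋖ lam` informally): `μ ≤ lam` and
`μ.card + 1 = lam.card`. -/
def CoversBelow (μ lam : YoungDiagram) : Prop :=
  μ ≤ lam ∧ μ.card + 1 = lam.card

/-- `d : YoungDiagram → ℕ` counts standard Young tableaux:
`d ⊥ = 1` and, for every `lam ≠ ⊥`, `d lam` is the sum of `d μ` over the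
(finite) set of diagrams `μ` covered by `lam`. -/
def CountsSYT (d : YoungDiagram → ℕ) : Prop :=
  d ⊥ = 1 ∧ ∀ lam : YoungDiagram, lam ≠ ⊥ →
    d lam = ∑ᶠ μ ∈ {μ : YoungDiagram | CoversBelow μ lam}, d μ

open Finset

namespace YoungDiagram

variable {μ ν : YoungDiagram}

instance : DecidableEq YoungDiagram := fun _ _ => decidable_of_iff _ YoungDiagram.ext_iff.symm

lemma succ_mul_succ_le_card {i j : ℕ} (h : (i, j) ∈ μ) : (i + 1) * (j + 1) ≤ μ.card := by
  have hsub : Iic (i, j) ⊆ μ.cells := fun b hb => (mem_cells b).2 (μ.isLowerSet (mem_Iic.1 hb) h)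
  simpa [← Iic_product_Iic, Nat.card_Iic] using card_le_card hsub

lemma finite_setOf_card_eq (n : ℕ) : {μ : YoungDiagram | μ.card = n}.Finite := by
  refine Set.Finite.of_finite_image (f := cells) ?_ fun μ _ ν _ h => YoungDiagram.ext h
  refine ((range n ×ˢ range n).powerset.finite_toSet).subset ?_
  rintro _ ⟨μ, rfl, rfl⟩
  refine mem_coe.2 (mem_powerset.2 fun ⟨i, j⟩ hc => ?_)
  have := succ_mul_succ_le_card ((mem_cells _).1 hc)
  simp only [mem_product, mem_range]
  constructor <;> nlinarith

lemma card_lt_card_of_lt (h : μ < ν) : μ.card < ν.card :=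
  card_lt_card (cells_ssubset_iff.2 h)

lemma eq_of_le_of_card_le (h : μ ≤ ν) (hc : ν.card ≤ μ.card) : μ = ν :=
  YoungDiagram.ext (eq_of_subset_of_card_le (cells_subset_iff.2 h) hc)

lemma card_sup_add_card_inf (μ ν : YoungDiagram) :
    (μ ⊔ ν).card + (μ ⊓ ν).card = μ.card + ν.card := by
  simp only [YoungDiagram.card, cells_sup, cells_inf, card_union_add_card_inter]

lemma card_eq_zero_iff : μ.card = 0 ↔ μ = ⊥ := by
  simp [YoungDiagram.card, ← cells_bot, YoungDiagram.ext_iff]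

def insertCell (μ : YoungDiagram) (c : ℕ × ℕ) (hc : Minimal (· ∉ μ) c) : YoungDiagram where
  cells := insert c μ.cells
  isLowerSet := by
    intro a b hba ha
    rw [coe_insert, Set.mem_insert_iff, mem_coe, mem_cells] at ha ⊢
    rcases ha with rfl | ha
    · exact (eq_or_lt_of_le hba).imp id fun hlt => not_not.1 ((minimal_iff_forall_lt.1 hc).2 hlt)
    · exact Or.inr (μ.isLowerSet hba ha)

def eraseCell (μ : YoungDiagram) (c : ℕ × ℕ) (hc : Maximal (· ∈ μ) c) : YoungDiagram where
  cells := μ.cells.erase c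
  isLowerSet := by
    rw [coe_erase]
    exact μ.isLowerSet.erase fun b hb hcb => le_antisymm (hc.2 hb hcb) hcb

lemma coversBelow_iff_exists_cells_eq_insert :
    CoversBelow μ ν ↔ ∃ c ∉ μ, ν.cells = insert c μ.cells := by
  constructor
  · rintro ⟨hle, hcard⟩
    have hsub : μ.cells ⊆ ν.cells := cells_subset_iff.2 hle
    have hcard' : #μ.cells + 1 = #ν.cells := hcard
    obtain ⟨c, hc⟩ := card_eq_one.1 (by rw [card_sdiff_of_subset hsub]; omega :
      #(ν.cells \ μ.cells) = 1)
    have hcν : c ∈ ν.cells \ μ.cells := hc ▸ mem_singleton_self c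
    refine ⟨c, (mem_sdiff.1 hcν).2, ?_⟩
    rw [← sdiff_union_of_subset hsub, hc, insert_eq]
  · rintro ⟨c, hc, hν⟩
    refine ⟨cells_subset_iff.1 (hν ▸ subset_insert c μ.cells), ?_⟩
    rw [YoungDiagram.card, YoungDiagram.card, hν, card_insert_of_notMem hc]

lemma coversBelow_insertCell {c : ℕ × ℕ} (hc : Minimal (· ∉ μ) c) :
    CoversBelow μ (μ.insertCell c hc) :=
  coversBelow_iff_exists_cells_eq_insert.2 ⟨c, hc.1, rfl⟩

lemma coversBelow_eraseCell {c : ℕ × ℕ} (hc : Maximal (· ∈ μ) c) :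
    CoversBelow (μ.eraseCell c hc) μ :=
  coversBelow_iff_exists_cells_eq_insert.2
    ⟨c, notMem_erase c μ.cells, (insert_erase ((mem_cells c).2 hc.1)).symm⟩

lemma minimal_notMem_of_cells_eq_insert {c : ℕ × ℕ} (hc : c ∉ μ)
    (hν : ν.cells = insert c μ.cells) : Minimal (· ∉ μ) c := by
  refine minimal_iff_forall_lt.2 ⟨hc, fun b hbc hb => ?_⟩
  have hcν : c ∈ ν := (mem_cells c).1 (hν ▸ mem_insert_self c _)
  have hbν : b ∈ ν.cells := (mem_cells b).2 (ν.isLowerSet hbc.le hcν)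
  rcases mem_insert.1 (hν ▸ hbν) with rfl | hbμ
  · exact lt_irrefl b hbc
  · exact hb hbμ

lemma maximal_mem_of_cells_eq_insert {c : ℕ × ℕ} (hc : c ∉ μ)
    (hν : ν.cells = insert c μ.cells) : Maximal (· ∈ ν) c := by
  refine maximal_iff_forall_gt.2 ⟨(mem_cells c).1 (hν ▸ mem_insert_self c _), fun b hcb hb => ?_⟩
  rcases mem_insert.1 (hν ▸ (mem_cells b).2 hb) with rfl | hbμ
  · exact lt_irrefl b hcb
  · exact hc (μ.isLowerSet hcb.le hbμ)

lemma minimal_notMem_iff {i j : ℕ} :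
    Minimal (· ∉ μ) (i, j) ↔ j = μ.rowLen i ∧ (i = 0 ∨ μ.rowLen i < μ.rowLen (i - 1)) := by
  simp only [minimal_iff_forall_lt, not_not, mem_iff_lt_rowLen, not_lt, Prod.forall, Prod.mk_lt_mk]
  constructor
  · rintro ⟨hj, h⟩
    have hj' : j ≤ μ.rowLen i := by
      by_contra! hlt
      exact (h i (μ.rowLen i) (Or.inr ⟨le_rfl, hlt⟩)).false
    refine ⟨le_antisymm hj' hj, ?_⟩
    rcases Nat.eq_zero_or_pos i with hi | hi
    · exact Or.inl hi
    · exact Or.inr (by have := h (i - 1) j (Or.inl ⟨by omega, le_rfl⟩); omega)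
  · rintro ⟨rfl, hi⟩
    refine ⟨le_rfl, fun a k hak => ?_⟩
    rcases hak with ⟨ha, hk⟩ | ⟨ha, hk⟩
    · have := μ.rowLen_anti a (i - 1) (by omega)
      omega
    · have := μ.rowLen_anti a i ha
      omega

lemma maximal_mem_iff {i j : ℕ} :
    Maximal (· ∈ μ) (i, j) ↔ j + 1 = μ.rowLen i ∧ μ.rowLen (i + 1) < μ.rowLen i := by
  simp only [maximal_iff_forall_gt, mem_iff_lt_rowLen, not_lt, Prod.forall, Prod.mk_lt_mk]
  constructor
  · rintro ⟨hj, h⟩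
    have h1 := h i (j + 1) (Or.inr ⟨le_rfl, j.lt_succ_self⟩)
    have h2 := h (i + 1) j (Or.inl ⟨i.lt_succ_self, le_rfl⟩)
    omega
  · rintro ⟨hj, hi⟩
    refine ⟨by omega, fun a k hak => ?_⟩
    rcases hak with ⟨ha, hk⟩ | ⟨ha, hk⟩
    · have := μ.rowLen_anti (i + 1) a ha
      omega
    · have := μ.rowLen_anti i a ha
      omega

def addableRows (μ : YoungDiagram) : Finset ℕ :=
  (range (μ.colLen 0 + 1)).filter fun i => i = 0 ∨ μ.rowLen i < μ.rowLen (i - 1)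

def removableRows (μ : YoungDiagram) : Finset ℕ :=
  (range (μ.colLen 0)).filter fun i => μ.rowLen (i + 1) < μ.rowLen i

lemma lt_colLen_zero_of_rowLen_pos {i : ℕ} (h : 0 < μ.rowLen i) : i < μ.colLen 0 :=
  mem_iff_lt_colLen.1 (mem_iff_lt_rowLen.2 h)

lemma mem_addableRows {i : ℕ} :
    i ∈ μ.addableRows ↔ i = 0 ∨ μ.rowLen i < μ.rowLen (i - 1) := by
  refine mem_filter.trans ⟨And.right, fun h => ⟨mem_range.2 ?_, h⟩⟩
  rcases h with rfl | h
  · exact Nat.succ_pos _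
  · have := lt_colLen_zero_of_rowLen_pos (μ := μ) (i := i - 1) (by omega)
    omega

lemma mem_removableRows {i : ℕ} : i ∈ μ.removableRows ↔ μ.rowLen (i + 1) < μ.rowLen i :=
  mem_filter.trans ⟨And.right, fun h => ⟨mem_range.2 (lt_colLen_zero_of_rowLen_pos (by omega)), h⟩⟩

lemma card_addableRows (μ : YoungDiagram) : #μ.addableRows = #μ.removableRows + 1 := by
  have h : μ.addableRows = insert 0 (μ.removableRows.image (· + 1)) := by
    ext i
    rcases i with _ | i <;> simp [mem_addableRows, mem_removableRows]
  rw [h, card_insert_of_notMem (by simp), card_image_of_injective _ (add_left_injective 1)]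

noncomputable def withCard (n : ℕ) : Finset YoungDiagram := (finite_setOf_card_eq n).toFinset

lemma finite_coversBelow_right (μ : YoungDiagram) : {ν | CoversBelow μ ν}.Finite :=
  (finite_setOf_card_eq (μ.card + 1)).subset fun _ h => h.2.symm

lemma finite_coversBelow_left (ν : YoungDiagram) : {μ | CoversBelow μ ν}.Finite :=
  (finite_setOf_card_eq (ν.card - 1)).subset fun _ h => by simp [← h.2]

noncomputable def upperCovers (μ : YoungDiagram) : Finset YoungDiagram :=
  (finite_coversBelow_right μ).toFinset

noncomputable def lowerCovers (ν : YoungDiagram) : Finset YoungDiagram :=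
  (finite_coversBelow_left ν).toFinset

@[simp] lemma mem_withCard {n : ℕ} : μ ∈ withCard n ↔ μ.card = n := Set.Finite.mem_toFinset _

@[simp] lemma mem_upperCovers : ν ∈ μ.upperCovers ↔ CoversBelow μ ν := Set.Finite.mem_toFinset _

@[simp] lemma mem_lowerCovers : μ ∈ ν.lowerCovers ↔ CoversBelow μ ν := Set.Finite.mem_toFinset _

lemma card_upperCovers (μ : YoungDiagram) : #μ.upperCovers = #μ.addableRows := by
  refine (card_bij (fun i hi => μ.insertCell (i, μ.rowLen i)
    (minimal_notMem_iff.2 ⟨rfl, mem_addableRows.1 hi⟩)) ?_ ?_ ?_).symm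
  · exact fun i hi => mem_upperCovers.2 (coversBelow_insertCell _)
  · intro i₁ _ i₂ _ h
    have := (insert_inj (by simp [mem_iff_lt_rowLen])).1 (congrArg cells h)
    exact (Prod.mk.inj this).1
  · intro ν hν
    obtain ⟨⟨i, j⟩, hc, hν⟩ := coversBelow_iff_exists_cells_eq_insert.1 (mem_upperCovers.1 hν)
    obtain ⟨rfl, hi⟩ := minimal_notMem_iff.1 (minimal_notMem_of_cells_eq_insert hc hν)
    exact ⟨i, mem_addableRows.2 hi, YoungDiagram.ext hν.symm⟩

lemma card_lowerCovers (ν : YoungDiagram) : #ν.lowerCovers = #ν.removableRows := by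
  refine (card_bij (fun i hi => ν.eraseCell (i, ν.rowLen i - 1)
    (maximal_mem_iff.2 ⟨by have := mem_removableRows.1 hi; omega, mem_removableRows.1 hi⟩))
    ?_ ?_ ?_).symm
  · exact fun i hi => mem_lowerCovers.2 (coversBelow_eraseCell _)
  · intro i₁ hi₁ i₂ _ h
    have hmem : (i₁, ν.rowLen i₁ - 1) ∈ ν.cells := by
      have := mem_removableRows.1 hi₁
      rw [mem_cells, mem_iff_lt_rowLen]
      omega
    have := (erase_inj _ hmem).1 (congrArg cells h)
    exact (Prod.mk.inj this).1
  · intro μ hμ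
    obtain ⟨⟨i, j⟩, hc, hν⟩ := coversBelow_iff_exists_cells_eq_insert.1 (mem_lowerCovers.1 hμ)
    obtain ⟨hj, hi⟩ := maximal_mem_iff.1 (maximal_mem_of_cells_eq_insert hc hν)
    obtain rfl : j = ν.rowLen i - 1 := by omega
    exact ⟨i, mem_removableRows.2 hi, YoungDiagram.ext (by
      simp only [eraseCell, hν, erase_insert ((mem_cells _).not.2 hc)])⟩

lemma card_upperCovers_eq_card_lowerCovers_add_one (μ : YoungDiagram) :
    #μ.upperCovers = #μ.lowerCovers + 1 := by
  rw [card_upperCovers, card_lowerCovers, card_addableRows]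

lemma lt_sup_of_ne_of_card_eq (hne : μ ≠ ν) (hc : μ.card = ν.card) : μ < μ ⊔ ν :=
  lt_of_le_of_ne le_sup_left fun h =>
    hne (eq_of_le_of_card_le (h ▸ le_sup_right) hc.le).symm

lemma inf_lt_of_ne_of_card_eq (hne : μ ≠ ν) (hc : μ.card = ν.card) : μ ⊓ ν < μ :=
  lt_of_le_of_ne inf_le_left fun h =>
    hne (eq_of_le_of_card_le (h ▸ inf_le_right) hc.ge)

lemma upperCovers_inter_upperCovers (hne : μ ≠ ν) (hc : μ.card = ν.card) :
    μ.upperCovers ∩ ν.upperCovers = ({μ ⊔ ν} : Finset _).filter (·.card = μ.card + 1) := by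
  have hlt := card_lt_card_of_lt (lt_sup_of_ne_of_card_eq hne hc)
  ext κ
  simp only [mem_inter, mem_upperCovers, mem_filter, mem_singleton, CoversBelow]
  constructor
  · rintro ⟨⟨hμκ, hκ⟩, hνκ, -⟩
    have hle := sup_le hμκ hνκ
    obtain rfl := eq_of_le_of_card_le hle (by omega)
    exact ⟨rfl, hκ.symm⟩
  · rintro ⟨rfl, hκ⟩
    exact ⟨⟨le_sup_left, hκ.symm⟩, le_sup_right, by omega⟩

lemma lowerCovers_inter_lowerCovers (hne : μ ≠ ν) (hc : μ.card = ν.card) :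
    μ.lowerCovers ∩ ν.lowerCovers = ({μ ⊓ ν} : Finset _).filter (·.card + 1 = μ.card) := by
  have hlt := card_lt_card_of_lt (inf_lt_of_ne_of_card_eq hne hc)
  ext κ
  simp only [mem_inter, mem_lowerCovers, mem_filter, mem_singleton, CoversBelow]
  constructor
  · rintro ⟨⟨hκμ, hκ⟩, hκν, -⟩
    obtain rfl := (eq_of_le_of_card_le (le_inf hκμ hκν) (by omega)).symm
    exact ⟨rfl, hκ⟩
  · rintro ⟨rfl, hκ⟩
    exact ⟨⟨inf_le_left, hκ⟩, inf_le_right, by omega⟩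

theorem card_upperCovers_inter (hc : μ.card = ν.card) :
    #(μ.upperCovers ∩ ν.upperCovers) =
      #(μ.lowerCovers ∩ ν.lowerCovers) + if μ = ν then 1 else 0 := by
  by_cases hne : μ = ν
  · subst hne
    simp [card_upperCovers_eq_card_lowerCovers_add_one]
  · have := card_sup_add_card_inf μ ν
    rw [if_neg hne, upperCovers_inter_upperCovers hne hc, lowerCovers_inter_lowerCovers hne hc,
      filter_singleton, filter_singleton]
    split_ifs <;> simp <;> omega

lemma withCard_zero : withCard 0 = {⊥} := by
  ext μ
  simp only [mem_withCard, mem_singleton, card_eq_zero_iff]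

lemma sum_upperCovers_sum_lowerCovers {M : Type*} [AddCommMonoid M] (f : YoungDiagram → M)
    (μ : YoungDiagram) : ∑ ν ∈ μ.upperCovers, ∑ κ ∈ ν.lowerCovers, f κ =
      ∑ κ ∈ withCard μ.card, #(μ.upperCovers ∩ κ.upperCovers) • f κ := by
  simp_rw [← sum_const]
  refine sum_comm' fun ν κ => ?_
  simp only [mem_upperCovers, mem_lowerCovers, mem_inter, mem_withCard]
  exact (and_iff_left_of_imp fun ⟨h₁, h₂⟩ => add_right_cancel (h₂.2.trans h₁.2.symm)).symm

lemma sum_lowerCovers_sum_upperCovers {M : Type*} [AddCommMonoid M] (f : YoungDiagram → M)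
    (μ : YoungDiagram) : ∑ κ ∈ μ.lowerCovers, ∑ ν ∈ κ.upperCovers, f ν =
      ∑ ν ∈ withCard μ.card, #(μ.lowerCovers ∩ ν.lowerCovers) • f ν := by
  simp_rw [← sum_const]
  refine sum_comm' fun κ ν => ?_
  simp only [mem_upperCovers, mem_lowerCovers, mem_inter, mem_withCard]
  exact (and_iff_left_of_imp fun ⟨h₁, h₂⟩ => h₂.2.symm.trans h₁.2).symm

end YoungDiagram

open YoungDiagram

lemma CoversBelow.ne_bot {μ ν : YoungDiagram} (h : CoversBelow μ ν) : ν ≠ ⊥ := by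
  rw [ne_eq, ← card_eq_zero_iff, ← h.2]
  exact μ.card.succ_ne_zero

namespace CountsSYT

variable {d : YoungDiagram → ℕ}

lemma eq_sum_lowerCovers (hd : CountsSYT d) {ν : YoungDiagram} (hν : ν ≠ ⊥) :
    d ν = ∑ μ ∈ ν.lowerCovers, d μ := by
  rw [hd.2 ν hν, finsum_mem_eq_finite_toFinset_sum _ (finite_coversBelow_left ν)]
  rfl

theorem sum_upperCovers (hd : CountsSYT d) (μ : YoungDiagram) :
    ∑ ν ∈ μ.upperCovers, d ν = (μ.card + 1) * d μ := by
  have ih : ∀ κ ∈ μ.lowerCovers, ∑ ν ∈ κ.upperCovers, d ν = μ.card * d κ := fun κ hκ => by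
    rw [hd.sum_upperCovers κ, (mem_lowerCovers.1 hκ).2]
  have hlow : ∑ κ ∈ μ.lowerCovers, μ.card * d κ = μ.card * d μ := by
    rcases eq_or_ne μ ⊥ with rfl | hμ
    · simp [card_eq_zero_iff.2 rfl]
    · rw [← mul_sum, ← hd.eq_sum_lowerCovers hμ]
  calc ∑ ν ∈ μ.upperCovers, d ν
      = ∑ ν ∈ μ.upperCovers, ∑ κ ∈ ν.lowerCovers, d κ :=
        sum_congr rfl fun ν hν => hd.eq_sum_lowerCovers (mem_upperCovers.1 hν).ne_bot
    _ = ∑ κ ∈ withCard μ.card, #(μ.upperCovers ∩ κ.upperCovers) • d κ :=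
        sum_upperCovers_sum_lowerCovers d μ
    _ = ∑ κ ∈ withCard μ.card, #(μ.lowerCovers ∩ κ.lowerCovers) • d κ + d μ := by
        rw [sum_congr rfl fun κ hκ => by rw [card_upperCovers_inter (mem_withCard.1 hκ).symm]]
        simp only [smul_eq_mul, add_mul, sum_add_distrib, ite_mul, one_mul, zero_mul, sum_ite_eq,
          mem_withCard, if_true]
    _ = ∑ κ ∈ μ.lowerCovers, ∑ ν ∈ κ.upperCovers, d ν + d μ := by
        rw [sum_lowerCovers_sum_upperCovers]
    _ = (μ.card + 1) * d μ := by rw [sum_congr rfl ih, hlow, add_one_mul]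
termination_by μ.card
decreasing_by exact (mem_lowerCovers.1 hκ).2 ▸ κ.card.lt_succ_self

theorem sum_sq_withCard (hd : CountsSYT d) (n : ℕ) : ∑ ν ∈ withCard n, d ν ^ 2 = n.factorial := by
  induction n with
  | zero => rw [withCard_zero, sum_singleton, hd.1]; rfl
  | succ n ih =>
    calc ∑ ν ∈ withCard (n + 1), d ν ^ 2
        = ∑ ν ∈ withCard (n + 1), ∑ μ ∈ ν.lowerCovers, d ν * d μ := by
          refine sum_congr rfl fun ν hν => ?_
          have hν : ν ≠ ⊥ := by simp [← card_eq_zero_iff, mem_withCard.1 hν]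
          rw [sq, ← mul_sum, ← hd.eq_sum_lowerCovers hν]
      _ = ∑ μ ∈ withCard n, ∑ ν ∈ μ.upperCovers, d ν * d μ := by
          refine sum_comm' fun ν μ => ?_
          simp only [mem_upperCovers, mem_lowerCovers, mem_withCard]
          exact ⟨fun ⟨hν, h⟩ => ⟨h, by have := h.2; omega⟩, fun ⟨h, hμ⟩ => ⟨by rw [← h.2, hμ], h⟩⟩
      _ = ∑ μ ∈ withCard n, (n + 1) * d μ ^ 2 := by
          refine sum_congr rfl fun μ hμ => ?_
          rw [← sum_mul, hd.sum_upperCovers, mem_withCard.1 hμ, sq, mul_assoc]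
      _ = (n + 1).factorial := by rw [← mul_sum, ih, Nat.factorial_succ]

end CountsSYT

theorem sum_sq_dim_eq_factorial (d : YoungDiagram → ℕ) (hd : CountsSYT d)
    (n : ℕ) :
    {lam : YoungDiagram | lam.card = n}.Finite ∧
      ∑ᶠ lam ∈ {lam : YoungDiagram | lam.card = n}, (d lam) ^ 2 = n.factorial := by
  refine ⟨finite_setOf_card_eq n, ?_⟩
  rw [finsum_mem_eq_finite_toFinset_sum _ (finite_setOf_card_eq n)]
  exact hd.sum_sq_withCard n
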